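/- Let b ≥ 2, D ⊊ {0,...,b-1} nonempty, and S ⊆ ℕ with ℕ \ S infinite. Then the Fourier dimension of E_{S,D} is 0. -/

import Mathlib

open MeasureTheory

/-- The set defined by digit restrictions. -/
def ESD (b : ℕ) (D : Set ℕ) (S : Set ℕ) : Set ℝ :=
  {x : ℝ | ∃ f : ℕ → ℕ, (∀ n : ℕ, 1 ≤ n → f n < b) ∧
    (∀ n : ℕ, 1 ≤ n → n ∉ S → f n ∈ D) ∧
    x = ∑' n : ℕ, (f (n + 1) : ℝ) / (b : ℝ) ^ (n + 1)}

/-- Fourier dimension of a subset of ℝ. -/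
noncomputable def fourierDim (A : Set ℝ) : ℝ :=
  sSup {β : ℝ | β ∈ Set.Icc (0 : ℝ) 1 ∧ ∃ μ : Measure ℝ, IsProbabilityMeasure μ ∧
    μ Aᶜ = 0 ∧ ∃ C : ℝ, 0 < C ∧ ∀ ξ : ℝ, ξ ≠ 0 →
      ‖∫ x : ℝ, Complex.exp (-2 * Real.pi * Complex.I * ξ * x) ∂μ‖ ≤ C * |ξ| ^ (-β / 2)}

noncomputable def dval (b : ℕ) (g : ℕ → ℕ) : ℝ := ∑' j : ℕ, (g (j + 1) : ℝ) / (b : ℝ) ^ (j + 1)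

section digits
variable {b : ℕ}

lemma hbR (hb : 2 ≤ b) : (1:ℝ) < (b:ℝ) := by exact_mod_cast lt_of_lt_of_le one_lt_two hb

lemma summable_dval (hb : 2 ≤ b) (g : ℕ → ℕ) (hg : ∀ j, 1 ≤ j → g j < b) :
    Summable (fun j : ℕ => (g (j + 1) : ℝ) / (b : ℝ) ^ (j + 1)) := by
  have hb1 := hbR hb
  have hb0 : (0:ℝ) < b := lt_trans one_pos hb1
  refine Summable.of_nonneg_of_le (f := fun j : ℕ => ((b:ℝ))⁻¹ ^ j)
    (fun j => by positivity) (fun j => by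
      have h2 : ((b:ℝ))⁻¹ ^ j = (b:ℝ) / (b:ℝ)^(j+1) := by rw [inv_pow, pow_succ]; field_simp
      rw [h2]
      gcongr
      exact_mod_cast (hg (j+1) (Nat.le_add_left 1 j)).le)
    (summable_geometric_of_lt_one (by positivity) (inv_lt_one_of_one_lt₀ hb1))

lemma dval_nonneg (g : ℕ → ℕ) : 0 ≤ dval b g :=
  tsum_nonneg (fun j => by positivity)

lemma dval_le_one (hb : 2 ≤ b) (g : ℕ → ℕ) (hg : ∀ j, 1 ≤ j → g j < b) : dval b g ≤ 1 := by
  have hb1 := hbR hb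
  have hb0 : (0:ℝ) < b := lt_trans one_pos hb1
  have hsum2 : Summable (fun j : ℕ => ((b:ℝ) - 1) * ((b:ℝ))⁻¹ ^ (j+1)) := by
    apply Summable.mul_left
    exact (summable_geometric_of_lt_one (by positivity) (inv_lt_one_of_one_lt₀ hb1)).comp_injective
      (add_left_injective 1)
  have hle : dval b g ≤ ∑' j : ℕ, ((b:ℝ) - 1) * ((b:ℝ))⁻¹ ^ (j+1) := by
    apply Summable.tsum_le_tsum _ (summable_dval hb g hg) hsum2
    intro j
    have h1 : (g (j+1) : ℝ) ≤ (b:ℝ) - 1 := by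
      have := hg (j+1) (Nat.le_add_left 1 j)
      have : g (j+1) ≤ b - 1 := Nat.le_sub_one_of_lt this
      have h2 : ((g (j+1) : ℕ) : ℝ) ≤ ((b - 1 : ℕ) : ℝ) := by exact_mod_cast this
      rwa [Nat.cast_sub (le_trans one_le_two hb), Nat.cast_one] at h2
    rw [div_eq_mul_inv, ← inv_pow]
    exact mul_le_mul_of_nonneg_right h1 (by positivity)
  have hr : ∑' j : ℕ, ((b:ℝ))⁻¹ ^ j = (1 - (b:ℝ)⁻¹)⁻¹ :=
    tsum_geometric_of_lt_one (by positivity) (inv_lt_one_of_one_lt₀ hb1)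
  have hval : ∑' j : ℕ, ((b:ℝ) - 1) * ((b:ℝ))⁻¹ ^ (j+1) = 1 := by
    have : ∀ j : ℕ, ((b:ℝ) - 1) * ((b:ℝ))⁻¹ ^ (j+1) = (((b:ℝ) - 1) * (b:ℝ)⁻¹) * ((b:ℝ))⁻¹ ^ j := by
      intro j; rw [pow_succ']; ring
    rw [tsum_congr this, tsum_mul_left, hr]
    have hbne : (b:ℝ) ≠ 0 := ne_of_gt hb0
    have h1 : (1 - (b:ℝ)⁻¹) = ((b:ℝ) - 1) / b := by field_simp
    rw [h1]
    have hb1ne : (b:ℝ) - 1 ≠ 0 := by linarith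
    field_simp
  linarith [hle, hval.le, hval.ge]

end digits

lemma dval_head (hb : 2 ≤ b) (g : ℕ → ℕ) (hg : ∀ j, 1 ≤ j → g j < b) :
    dval b g = (g 1 : ℝ) / b + dval b (fun j => g (j + 1)) / b := by
  have hb0 : (0:ℝ) < b := lt_trans one_pos (hbR hb)
  have hs := summable_dval hb g hg
  have h := Summable.sum_add_tsum_nat_add (f := fun j : ℕ => (g (j + 1) : ℝ) / (b : ℝ) ^ (j + 1)) 1 hs
  rw [Finset.sum_range_one] at h
  have h2 : ∑' j : ℕ, (g (j + 1 + 1) : ℝ) / (b : ℝ) ^ (j + 1 + 1)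
      = dval b (fun j => g (j + 1)) / b := by
    unfold dval
    rw [← tsum_div_const]
    apply tsum_congr
    intro j
    rw [pow_succ]
    field_simp
  rw [show dval b g = ∑' j : ℕ, (g (j + 1) : ℝ) / (b : ℝ) ^ (j + 1) from rfl, ← h]
  rw [h2]
  norm_num

lemma dval_shift (hb : 2 ≤ b) (f : ℕ → ℕ) (hf : ∀ j, 1 ≤ j → f j < b) (n : ℕ) :
    ∃ N : ℕ, (b:ℝ)^n * dval b f = N + dval b (fun j => f (n + j)) := by
  have hb0 : (0:ℝ) < b := lt_trans one_pos (hbR hb)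
  have hbne : (b:ℝ) ≠ 0 := ne_of_gt hb0
  have hs := summable_dval hb f hf
  have hs' : Summable (fun k : ℕ => (b:ℝ)^n * ((f (k+1) : ℝ) / (b:ℝ)^(k+1))) :=
    hs.mul_left _
  have h := Summable.sum_add_tsum_nat_add (f := fun k : ℕ => (b:ℝ)^n * ((f (k+1) : ℝ) / (b:ℝ)^(k+1))) n hs'
  refine ⟨∑ k ∈ Finset.range n, f (k+1) * b^(n-1-k), ?_⟩
  have hlhs : (b:ℝ)^n * dval b f
      = ∑' k : ℕ, (b:ℝ)^n * ((f (k+1) : ℝ) / (b:ℝ)^(k+1)) := by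
    rw [dval, ← tsum_mul_left]
  rw [hlhs, ← h]
  congr 1
  · push_cast
    apply Finset.sum_congr rfl
    intro k hk
    have hkn : k < n := Finset.mem_range.mp hk
    have hpow : (b:ℝ)^n = (b:ℝ)^(k+1) * (b:ℝ)^(n-1-k) := by
      rw [← pow_add]
      congr 1
      omega
    rw [hpow]
    field_simp
  · unfold dval
    apply tsum_congr
    intro i
    simp only []
    have hpow : (b:ℝ)^(i+n+1) = (b:ℝ)^n * (b:ℝ)^(i+1) := by
      rw [← pow_add]; congr 1; omega
    have : n + (i + 1) = i + n + 1 := by omega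
    rw [this, hpow]
    field_simp

lemma fract_dval (hb : 2 ≤ b) (f : ℕ → ℕ) (hf : ∀ j, 1 ≤ j → f j < b) (n : ℕ) :
    Int.fract ((b:ℝ)^n * dval b f) = Int.fract (dval b (fun j => f (n + j))) := by
  obtain ⟨N, hN⟩ := dval_shift hb f hf n
  rw [hN]
  have := Int.fract_intCast_add (N : ℤ) (dval b (fun j => f (n + j)))
  simpa using this

lemma fract_notin {D S : Set ℕ} (hb : 2 ≤ b) (hDb : D ⊆ Set.Iio b) {d₀ : ℕ}
    (hd₀b : d₀ < b) (hd₀ : d₀ ∉ D) {x : ℝ} (hx : x ∈ ESD b D S) {n : ℕ} (hn : n + 1 ∉ S) :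
    Int.fract ((b:ℝ)^n * x) ∉ Set.Ioo ((d₀:ℝ)/b) (((d₀:ℝ)+1)/b) := by
  have hb0 : (0:ℝ) < b := lt_trans one_pos (hbR hb)
  obtain ⟨f, hfb, hfD, hfx⟩ := hx
  have hxval : x = dval b f := hfx
  set g : ℕ → ℕ := fun j => f (n + j) with hg
  have hgb : ∀ j, 1 ≤ j → g j < b := fun j hj => hfb (n + j) (by omega)
  have hfr : Int.fract ((b:ℝ)^n * x) = Int.fract (dval b g) := by
    rw [hxval]; exact fract_dval hb f hfb n
  set t := dval b g with htdef
  have ht0 : 0 ≤ t := dval_nonneg g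
  have ht1 : t ≤ 1 := dval_le_one hb g hgb
  have hhead := dval_head hb g hgb
  have hrange : (g 1 : ℝ)/b ≤ t ∧ t ≤ ((g 1 : ℝ)+1)/b := by
    have h0 : 0 ≤ dval b (fun j => g (j + 1)) := dval_nonneg _
    have h1 : dval b (fun j => g (j + 1)) ≤ 1 :=
      dval_le_one hb _ (fun j hj => hgb (j+1) (by omega))
    constructor
    · rw [← htdef] at hhead
      rw [hhead]
      have : 0 ≤ dval b (fun j => g (j + 1)) / b := by positivity
      linarith
    · rw [← htdef] at hhead
      rw [hhead, add_div]
      have : dval b (fun j => g (j + 1)) / b ≤ 1 / b := by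
        gcongr
      linarith
  have hd : g 1 ∈ D := hfD (n + 1) (by omega) hn
  have hdne : g 1 ≠ d₀ := fun h => hd₀ (h ▸ hd)
  intro hmem
  rw [hfr] at hmem
  by_cases hlt : t < 1
  · rw [Int.fract_eq_self.mpr ⟨ht0, hlt⟩] at hmem
    rcases lt_or_gt_of_ne hdne with hcase | hcase
    · have : ((g 1 : ℝ) + 1)/b ≤ (d₀:ℝ)/b := by
        gcongr
        exact_mod_cast hcase
      exact absurd hmem.1 (by linarith [hrange.2])
    · have : ((d₀:ℝ) + 1)/b ≤ (g 1 : ℝ)/b := by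
        gcongr
        exact_mod_cast hcase
      exact absurd hmem.2 (by linarith [hrange.1])
  · have hteq : t = 1 := le_antisymm ht1 (not_lt.mp hlt)
    rw [hteq, Int.fract_one] at hmem
    have : (0:ℝ) ≤ (d₀:ℝ)/b := by positivity
    exact absurd hmem.1 (by linarith)

lemma circle_norm_ge {δ u : ℝ} (hδ : 0 < δ) (h1 : δ ≤ |u|) (h2 : |u| ≤ 1 - δ) :
    δ ≤ ‖(u : AddCircle (1:ℝ))‖ := by
  rw [AddCircle.norm_eq]
  simp only [inv_one, one_mul, mul_one]
  set k := round u with hk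
  by_cases hk0 : k = 0
  · rw [hk0]
    simpa using h1
  · have hk1 : (1:ℝ) ≤ |(k:ℝ)| := by
      exact_mod_cast Int.one_le_abs (by exact_mod_cast hk0)
    have := abs_sub_abs_le_abs_sub (k:ℝ) u
    rw [abs_sub_comm] at this
    linarith

lemma coe_fract_eq (y : ℝ) : ((y : ℝ) : AddCircle (1:ℝ)) = ((Int.fract y : ℝ) : AddCircle (1:ℝ)) := by
  have h0 : ((y - Int.fract y : ℝ) : AddCircle (1:ℝ)) = 0 := by
    rw [AddCircle.coe_eq_zero_iff]
    exact ⟨⌊y⌋, by simp [Int.self_sub_fract]⟩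
  calc ((y : ℝ) : AddCircle (1:ℝ))
      = ((Int.fract y + (y - Int.fract y) : ℝ) : AddCircle (1:ℝ)) := by ring_nf
    _ = ((Int.fract y : ℝ) : AddCircle (1:ℝ)) + ((y - Int.fract y : ℝ) : AddCircle (1:ℝ)) :=
        rfl
    _ = ((Int.fract y : ℝ) : AddCircle (1:ℝ)) := by rw [h0, add_zero]

open scoped Real

set_option maxHeartbeats 1000000 in
lemma no_measure {b : ℕ} (hb : 2 ≤ b) {D S : Set ℕ} (hDb : D ⊆ Set.Iio b) (hDp : D ≠ Set.Iio b)
    (hSc : (Sᶜ : Set ℕ).Infinite) {β : ℝ} (hβ : 0 < β) (μ : Measure ℝ)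
    [IsProbabilityMeasure μ] (hnull : μ (ESD b D S)ᶜ = 0) {C : ℝ} (hC : 0 < C)
    (hbound : ∀ ξ : ℝ, ξ ≠ 0 →
      ‖∫ x : ℝ, Complex.exp (-2 * Real.pi * Complex.I * ξ * x) ∂μ‖ ≤ C * |ξ| ^ (-β / 2)) :
    False := by
  haveI : Fact ((0:ℝ) < 1) := ⟨one_pos⟩
  have hb1 : (1:ℝ) < b := hbR hb
  have hb0 : (0:ℝ) < b := lt_trans one_pos hb1
  obtain ⟨d₀, hd₀b, hd₀D⟩ : ∃ d₀, d₀ < b ∧ d₀ ∉ D := by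
    obtain ⟨d₀, h1, h2⟩ := Set.exists_of_ssubset (ssubset_of_subset_of_ne hDb hDp)
    exact ⟨d₀, h1, h2⟩
  set c : ℝ := ((d₀:ℝ) + 1/2)/b with hc
  set δ : ℝ := 1/(2*b) with hδdef
  have hδ : 0 < δ := by positivity
  set cq : AddCircle (1:ℝ) := ((c : ℝ) : AddCircle (1:ℝ)) with hcq
  set gr : AddCircle (1:ℝ) → ℝ := fun y => max 0 (δ - dist y cq) with hgr
  have hgrcont : Continuous gr :=
    continuous_const.max (continuous_const.sub (continuous_id.dist continuous_const))
  have hgrnn : ∀ y, 0 ≤ gr y := fun y => le_max_left _ _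
  have hgrbd : ∀ y, ‖gr y‖ ≤ δ := by
    intro y
    rw [Real.norm_eq_abs, abs_of_nonneg (hgrnn y)]
    exact max_le hδ.le (by linarith [dist_nonneg (x := y) (y := cq)])
  -- the integral of gr over the circle is positive
  set I₀ : ℝ := ∫ y, gr y ∂(@AddCircle.haarAddCircle 1 _) with hI₀def
  have hgrint : Integrable gr (@AddCircle.haarAddCircle 1 _) :=
    hgrcont.integrable_of_hasCompactSupport (HasCompactSupport.of_compactSpace _)
  have hI₀ : 0 < I₀ := by
    rw [hI₀def]
    rw [integral_pos_iff_support_of_nonneg hgrnn hgrint]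
    have hsupp : Function.support gr = Metric.ball cq δ := by
      ext y
      simp only [Function.mem_support, Metric.mem_ball, hgr]
      constructor
      · intro h
        by_contra hcon
        push_neg at hcon
        exact h (max_eq_left (by linarith))
      · intro h
        have : 0 < δ - dist y cq := by linarith
        rw [max_eq_right this.le]
        exact ne_of_gt this
    rw [hsupp]
    exact Metric.measure_ball_pos _ _ hδ
  -- complex version of gr
  set g : C(AddCircle (1:ℝ), ℂ) := ⟨fun y => ((gr y : ℝ) : ℂ), Complex.continuous_ofReal.comp hgrcont⟩ with hgdef
  set ε : ℝ := I₀ / 8 with hεdef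
  have hε : 0 < ε := by positivity
  -- approximate g by a trigonometric polynomial P
  obtain ⟨P, hPmem, hPdist⟩ : ∃ P ∈ Submodule.span ℂ (Set.range (@fourier 1)), ‖g - P‖ < ε := by
    have hgmem : g ∈ (Submodule.span ℂ (Set.range (@fourier 1))).topologicalClosure := by
      rw [span_fourier_closure_eq_top]
      trivial
    have hcl : g ∈ closure ((Submodule.span ℂ (Set.range (@fourier 1)) : Submodule ℂ _) : Set C(AddCircle (1:ℝ), ℂ)) := hgmem
    rw [Metric.mem_closure_iff] at hcl
    obtain ⟨P, hP1, hP2⟩ := hcl ε hε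
    exact ⟨P, hP1, by rwa [dist_eq_norm] at hP2⟩
  obtain ⟨co, hco⟩ := Finsupp.mem_span_range_iff_exists_finsupp.mp hPmem
  set K : ℝ := ∑ i ∈ co.support, ‖co i‖ with hK
  have hKnn : 0 ≤ K := Finset.sum_nonneg (fun _ _ => norm_nonneg _)
  have hint : ∀ (ν : Measure (AddCircle (1:ℝ))) [IsFiniteMeasure ν] (f : C(AddCircle (1:ℝ), ℂ)),
      Integrable (fun y => f y) ν := fun ν _ f =>
    f.continuous.integrable_of_hasCompactSupport (HasCompactSupport.of_compactSpace _)
  have hPsum : ∀ (ν : Measure (AddCircle (1:ℝ))) [IsProbabilityMeasure ν],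
      ∫ y, P y ∂ν = ∑ i ∈ co.support, co i * ∫ y, fourier i y ∂ν := by
    intro ν _
    have hPco : ∀ y, P y = ∑ i ∈ co.support, co i • fourier i y := by
      intro y
      rw [← hco, Finsupp.sum]
      simp
    rw [integral_congr_ae (Filter.Eventually.of_forall hPco)]
    rw [integral_finset_sum _ (fun i _ => (hint ν (co i • fourier i)).congr ?_)]
    · exact Finset.sum_congr rfl (fun i _ => by rw [integral_smul]; rfl)
    · exact Filter.Eventually.of_forall (fun y => rfl)
  -- integrals of fourier monomials against Haar measure
  have hhaar0 : ∫ y, fourier (0:ℤ) y ∂(@AddCircle.haarAddCircle 1 _) = 1 := by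
    have : ∀ y : AddCircle (1:ℝ), fourier (0:ℤ) y = 1 := fun y => fourier_zero
    rw [integral_congr_ae (Filter.Eventually.of_forall this)]
    simp
  have hhaarm : ∀ m : ℤ, m ≠ 0 → ∫ y, fourier m y ∂(@AddCircle.haarAddCircle 1 _) = 0 := by
    intro m hm
    exact integral_eq_zero_of_add_right_eq_neg (μ := AddCircle.haarAddCircle)
      (fourier_add_half_inv_index hm one_pos)
  -- the pushforward measures
  set φ : ℕ → ℝ → AddCircle (1:ℝ) := fun n x => (((b:ℝ)^n * x : ℝ) : AddCircle (1:ℝ)) with hφ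
  have hφcont : ∀ n, Continuous (φ n) := fun n =>
    (AddCircle.continuous_mk' 1).comp (continuous_const.mul continuous_id)
  set ν : ℕ → Measure (AddCircle (1:ℝ)) := fun n => Measure.map (φ n) μ with hν
  haveI hνprob : ∀ n, IsProbabilityMeasure (ν n) := fun n =>
    Measure.isProbabilityMeasure_map (hφcont n).measurable.aemeasurable
  have hmap : ∀ n (f : C(AddCircle (1:ℝ), ℂ)), ∫ y, f y ∂(ν n) = ∫ x, f (φ n x) ∂μ := fun n f =>
    integral_map (hφcont n).measurable.aemeasurable f.continuous.aestronglyMeasurable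
  -- decay rate
  set q : ℝ := (b:ℝ) ^ (-β/2) with hqdef
  have hq0 : 0 < q := Real.rpow_pos_of_pos hb0 _
  have hq1 : q < 1 := Real.rpow_lt_one_of_one_lt_of_neg hb1 (by linarith)
  have hqn : ∀ n : ℕ, ((b:ℝ)^n : ℝ) ^ (-β/2) = q ^ n := by
    intro n
    calc ((b:ℝ)^n : ℝ) ^ (-β/2) = ((b:ℝ)^(n:ℝ) : ℝ) ^ (-β/2) := by rw [Real.rpow_natCast]
      _ = (b:ℝ) ^ ((n:ℝ) * (-β/2)) := by rw [← Real.rpow_mul hb0.le]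
      _ = (b:ℝ) ^ ((-β/2) * (n:ℝ)) := by rw [mul_comm]
      _ = q ^ (n:ℝ) := by rw [Real.rpow_mul hb0.le]
      _ = q ^ n := Real.rpow_natCast q n
  -- key decay bound for nonzero frequencies
  have hkey : ∀ n : ℕ, ∀ m : ℤ, m ≠ 0 → ‖∫ y, fourier m y ∂(ν n)‖ ≤ C * q ^ n := by
    intro n m hm
    rw [hmap n (fourier m)]
    set ξ : ℝ := -((m:ℝ) * (b:ℝ)^n) with hξdef
    have hξ : ξ ≠ 0 := by
      simp only [hξdef, neg_ne_zero]
      exact mul_ne_zero (Int.cast_ne_zero.mpr hm) (pow_ne_zero _ hb0.ne')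
    have heq : ∀ x : ℝ, fourier m (φ n x) = Complex.exp (-2 * Real.pi * Complex.I * ξ * x) := by
      intro x
      rw [show φ n x = (((b:ℝ)^n * x : ℝ) : AddCircle (1:ℝ)) from rfl, fourier_coe_apply]
      congr 1
      rw [hξdef]
      push_cast
      ring
    rw [integral_congr_ae (Filter.Eventually.of_forall heq)]
    have hle : (b:ℝ)^n ≤ |ξ| := by
      rw [hξdef, abs_neg, abs_mul, abs_pow, abs_of_nonneg hb0.le]
      have : (1:ℝ) ≤ |(m:ℝ)| := by exact_mod_cast Int.one_le_abs hm
      nlinarith [pow_pos hb0 n]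
    calc ‖∫ x : ℝ, Complex.exp (-2 * Real.pi * Complex.I * ξ * x) ∂μ‖
        ≤ C * |ξ| ^ (-β/2) := hbound ξ hξ
      _ ≤ C * ((b:ℝ)^n) ^ (-β/2) := by
          apply mul_le_mul_of_nonneg_left _ hC.le
          exact Real.rpow_le_rpow_of_nonpos (pow_pos hb0 n) hle (by linarith)
      _ = C * q ^ n := by rw [hqn]
  -- g integrates to zero against ν n for good n
  have hgzero : ∀ n : ℕ, n + 1 ∉ S → ∫ y, g y ∂(ν n) = 0 := by
    intro n hn
    rw [hmap n g]
    have hae : ∀ᵐ x ∂μ, x ∈ ESD b D S := by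
      rw [MeasureTheory.ae_iff]
      exact hnull
    have hzero : ∀ x ∈ ESD b D S, g (φ n x) = 0 := by
      intro x hx
      have hfr := fract_notin hb hDb hd₀b hd₀D hx hn
      set t := Int.fract ((b:ℝ)^n * x) with ht
      have ht0 : (0:ℝ) ≤ t := Int.fract_nonneg _
      have ht1 : t < 1 := Int.fract_lt_one _
      have h1 : c - δ = (d₀:ℝ)/b := by rw [hc, hδdef]; field_simp; ring
      have h2 : c + δ = ((d₀:ℝ)+1)/b := by rw [hc, hδdef]; field_simp; ring
      have hio : t ≤ c - δ ∨ c + δ ≤ t := by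
        by_contra hcon
        push_neg at hcon
        exact hfr ⟨by rw [← h1]; exact hcon.1, by rw [← h2]; exact hcon.2⟩
      have hcδ : δ ≤ c ∧ c ≤ 1 - δ := by
        have hd0 : (0:ℝ) ≤ (d₀:ℝ) := Nat.cast_nonneg _
        have hdb : (d₀:ℝ) + 1 ≤ (b:ℝ) := by exact_mod_cast hd₀b
        constructor
        · rw [hc, hδdef, div_le_div_iff₀ (by positivity) hb0]
          nlinarith
        · rw [hc, hδdef, div_le_iff₀ hb0]
          have h3 : (1 - 1/(2*(b:ℝ))) * b = b - 1/2 := by field_simp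
          rw [h3]
          linarith
      have hdist : δ ≤ dist (φ n x) cq := by
        have hcoe : φ n x = (((b:ℝ)^n * x : ℝ) : AddCircle (1:ℝ)) := rfl
        rw [hcoe, coe_fract_eq, ← ht, hcq, dist_eq_norm, ← AddCircle.coe_sub]
        apply circle_norm_ge hδ
        · rw [le_abs]
          rcases hio with h | h
          · right; linarith
          · left; linarith
        · rw [abs_le]
          constructor <;> linarith [hcδ.1, hcδ.2]
      have hgr0 : gr (φ n x) = 0 := by
        rw [hgr]
        exact max_eq_left (by linarith)
      show ((gr (φ n x) : ℝ) : ℂ) = 0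
      rw [hgr0, Complex.ofReal_zero]
    calc ∫ x, g (φ n x) ∂μ = ∫ _x, (0:ℂ) ∂μ :=
          integral_congr_ae (by filter_upwards [hae] with x hx; exact hzero x hx)
      _ = 0 := integral_zero _ _
  -- estimate ‖∫ P dν n‖ for good n
  have hPν : ∀ n : ℕ, n + 1 ∉ S → ‖∫ y, P y ∂(ν n)‖ ≤ ε := by
    intro n hn
    have hsub : (∫ y, P y ∂(ν n)) - ∫ y, g y ∂(ν n) = ∫ y, (P y - g y) ∂(ν n) :=
      (integral_sub (hint _ P) (hint _ g)).symm
    have hPeq : ∫ y, P y ∂(ν n) = ∫ y, (P y - g y) ∂(ν n) := by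
      rw [← hsub, hgzero n hn, sub_zero]
    rw [hPeq]
    have hb1' : ∀ y : AddCircle (1:ℝ), ‖P y - g y‖ ≤ ε := by
      intro y
      calc ‖P y - g y‖ = ‖(g - P) y‖ := by rw [ContinuousMap.sub_apply, norm_sub_rev]
        _ ≤ ‖g - P‖ := ContinuousMap.norm_coe_le_norm _ _
        _ ≤ ε := hPdist.le
    calc ‖∫ y, (P y - g y) ∂(ν n)‖ ≤ ε * ((ν n) Set.univ).toReal :=
          norm_integral_le_of_norm_le_const (Filter.Eventually.of_forall hb1')
      _ = ε := by simp
  -- estimate for the Haar integral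
  have hPh : I₀ - ε ≤ ‖∫ y, P y ∂(@AddCircle.haarAddCircle 1 _)‖ := by
    have hgI : ∫ y, g y ∂(@AddCircle.haarAddCircle 1 _) = ((I₀ : ℝ) : ℂ) := by
      rw [hI₀def]
      exact integral_ofReal
    have hsub : ‖(∫ y, g y ∂(@AddCircle.haarAddCircle 1 _)) - ∫ y, P y ∂(@AddCircle.haarAddCircle 1 _)‖ ≤ ε := by
      rw [← integral_sub (hint _ g) (hint _ P)]
      have hb2 : ∀ y : AddCircle (1:ℝ), ‖g y - P y‖ ≤ ε := by
        intro y
        calc ‖g y - P y‖ = ‖(g - P) y‖ := by rw [ContinuousMap.sub_apply]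
          _ ≤ ‖g - P‖ := ContinuousMap.norm_coe_le_norm _ _
          _ ≤ ε := hPdist.le
      calc ‖∫ y, (g y - P y) ∂(@AddCircle.haarAddCircle 1 _)‖
          ≤ ε * ((@AddCircle.haarAddCircle 1 _) Set.univ).toReal :=
            norm_integral_le_of_norm_le_const (Filter.Eventually.of_forall hb2)
        _ = ε := by simp
    have htri := norm_sub_norm_le (∫ y, g y ∂(@AddCircle.haarAddCircle 1 _))
      (∫ y, P y ∂(@AddCircle.haarAddCircle 1 _))
    rw [hgI] at htri hsub
    have : ‖((I₀:ℝ):ℂ)‖ = I₀ := by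
      rw [Complex.norm_real, Real.norm_eq_abs, abs_of_pos hI₀]
    linarith [htri, hsub, this.symm.le, this.le]
  -- comparison of the two integrals
  have hdiff : ∀ n : ℕ, ‖(∫ y, P y ∂(ν n)) - ∫ y, P y ∂(@AddCircle.haarAddCircle 1 _)‖
      ≤ K * (C * q ^ n) := by
    intro n
    rw [hPsum (ν n), hPsum (@AddCircle.haarAddCircle 1 _), ← Finset.sum_sub_distrib]
    refine le_trans (norm_sum_le _ _) ?_
    have hterm : ∀ i ∈ co.support,
        ‖co i * (∫ y, fourier i y ∂(ν n)) - co i * ∫ y, fourier i y ∂(@AddCircle.haarAddCircle 1 _)‖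
          ≤ ‖co i‖ * (C * q ^ n) := by
      intro i _
      rw [← mul_sub, norm_mul]
      apply mul_le_mul_of_nonneg_left _ (norm_nonneg _)
      by_cases hi0 : i = 0
      · subst hi0
        have hν0 : ∫ y, fourier (0:ℤ) y ∂(ν n) = 1 := by
          have : ∀ y : AddCircle (1:ℝ), fourier (0:ℤ) y = 1 := fun y => fourier_zero
          rw [integral_congr_ae (Filter.Eventually.of_forall this)]
          simp
        rw [hν0, hhaar0, sub_self, norm_zero]
        positivity
      · rw [hhaarm i hi0, sub_zero]
        exact hkey n i hi0
    refine le_trans (Finset.sum_le_sum hterm) ?_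
    rw [← Finset.sum_mul]
  -- choose a good n and derive the contradiction
  have htend : Filter.Tendsto (fun n : ℕ => K * (C * q ^ n)) Filter.atTop (nhds 0) := by
    have h := (tendsto_pow_atTop_nhds_zero_of_lt_one hq0.le hq1).const_mul (K * C)
    simp only [mul_zero] at h
    convert h using 2 with n
    ring
  obtain ⟨N, hN⟩ := (Metric.tendsto_atTop.mp htend) (I₀/2) (by positivity)
  obtain ⟨m, hmS, hmN⟩ := hSc.exists_gt N
  have hm1 : 1 ≤ m := by omega
  set n := m - 1 with hn
  have hnN : N ≤ n := by omega
  have hnS : n + 1 ∉ S := by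
    have : n + 1 = m := by omega
    rw [this]
    exact hmS
  have hq := hN n hnN
  rw [Real.dist_eq, sub_zero, abs_of_nonneg (by positivity)] at hq
  have := hPh
  have h1 := hPν n hnS
  have h2 := hdiff n
  have htri3 := norm_sub_le (∫ y, P y ∂(ν n))
    ((∫ y, P y ∂(ν n)) - ∫ y, P y ∂(@AddCircle.haarAddCircle 1 _))
  have hsimp : (∫ y, P y ∂(ν n)) - ((∫ y, P y ∂(ν n)) - ∫ y, P y ∂(@AddCircle.haarAddCircle 1 _))
      = ∫ y, P y ∂(@AddCircle.haarAddCircle 1 _) := by ring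
  rw [hsimp] at htri3
  linarith [hPh, h1, h2, hq, htri3, hεdef]

theorem stmt10 (b : ℕ) (hb : 2 ≤ b) (D : Set ℕ) (hD : D.Nonempty)
    (hDb : D ⊆ Set.Iio b) (hDp : D ≠ Set.Iio b) (S : Set ℕ)
    (hSc : (Sᶜ : Set ℕ).Infinite) :
    fourierDim (ESD b D S) = 0 := by
  set Q := {β : ℝ | β ∈ Set.Icc (0 : ℝ) 1 ∧ ∃ μ : Measure ℝ, IsProbabilityMeasure μ ∧
    μ (ESD b D S)ᶜ = 0 ∧ ∃ C : ℝ, 0 < C ∧ ∀ ξ : ℝ, ξ ≠ 0 →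
      ‖∫ x : ℝ, Complex.exp (-2 * Real.pi * Complex.I * ξ * x) ∂μ‖ ≤ C * |ξ| ^ (-β / 2)} with hQ
  have h0 : (0:ℝ) ∈ Q := by
    obtain ⟨d, hd⟩ := hD
    set f : ℕ → ℕ := fun _ => d with hf
    set x₀ : ℝ := ∑' n : ℕ, (f (n + 1) : ℝ) / (b : ℝ) ^ (n + 1) with hx₀
    have hx₀mem : x₀ ∈ ESD b D S := ⟨f, fun n _ => hDb hd, fun n _ _ => hd, rfl⟩
    refine ⟨⟨le_refl 0, zero_le_one⟩, Measure.dirac x₀, inferInstance, ?_, 1, one_pos, ?_⟩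
    · refine measure_mono_null (Set.compl_subset_compl.mpr (Set.singleton_subset_iff.mpr hx₀mem)) ?_
      rw [Measure.dirac_apply' _ (measurableSet_singleton x₀).compl]
      simp
    · intro ξ hξ
      have hcont : Continuous (fun x : ℝ => Complex.exp (-2 * Real.pi * Complex.I * ξ * x)) := by
        apply Complex.continuous_exp.comp
        exact (continuous_const.mul Complex.continuous_ofReal)
      rw [integral_dirac' _ _ hcont.stronglyMeasurable]
      have harg : (-2 * (Real.pi:ℂ) * Complex.I * (ξ:ℂ) * (x₀:ℂ))
          = ((-2 * Real.pi * ξ * x₀ : ℝ) : ℂ) * Complex.I := by push_cast; ring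
      rw [harg, Complex.norm_exp_ofReal_mul_I]
      rw [show -(0:ℝ)/2 = 0 by norm_num, Real.rpow_zero, mul_one]
  have hle : ∀ β ∈ Q, β ≤ 0 := by
    intro β hβ
    by_contra hpos
    push_neg at hpos
    obtain ⟨hIcc, μ, hprob, hnull, C, hC, hbound⟩ := hβ
    haveI := hprob
    exact no_measure hb hDb hDp hSc hpos μ hnull hC hbound
  rw [fourierDim, ← hQ]
  apply le_antisymm
  · exact csSup_le ⟨0, h0⟩ hle
  · exact le_csSup ⟨1, fun β hβ => hβ.1.2⟩ h0
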